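/- Let K*(s,v) = exp(−‖s − v‖²/2) be the isotropic Gaussian kernel on ℝ^D × ℝ^D, Ω' an invertible symmetric D×D matrix, and V ⊂ ℝ^D a set containing a point v₀ and all points v₀ + ∑_d λ_d γ_d e_d with γ_d ∈ {−1,0,1} and fixed λ_d > 0. Fix s ∈ ℝ^D. If real constants c, a_i (1 ≤ i ≤ D), a_{jk} (1 ≤ j ≤ k ≤ D) satisfy c K*(Ω's, Ω'v) + ∑_i a_i ∂_i^x K*(Ω's, Ω'v) + ∑_{j≤k} a_{jk} ∂²_{jk}^x K*(Ω's, Ω'v) = 0 for all v ∈ V, then all constants are zero. -/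

import Mathlib

open Finset

/-- The isotropic Gaussian kernel `K*(x,y) = exp(-‖x-y‖²/2)` on `ℝ^D`. -/
noncomputable def isoGaussKernel {D : ℕ} (x y : Fin D → ℝ) : ℝ :=
  Real.exp (-(∑ i, (x i - y i) ^ 2) / 2)

/-- Partial derivative `∂_i` in the first argument. -/
noncomputable def pd {D : ℕ} (i : Fin D) (f : (Fin D → ℝ) → ℝ) (x : Fin D → ℝ) : ℝ :=
  fderiv ℝ f x (Pi.single i 1)

/-- Second partial derivative `∂²_{jk}` in the first argument. -/
noncomputable def pdd {D : ℕ} (j k : Fin D) (f : (Fin D → ℝ) → ℝ) (x : Fin D → ℝ) : ℝ :=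
  fderiv ℝ (fun x' => fderiv ℝ f x' (Pi.single k 1)) x (Pi.single j 1)

/-!
Both partial derivatives of the Gaussian are the Gaussian times a polynomial in `u = x - y`:
`∂_i K = -u_i K` and `∂²_{jk} K = (u_j u_k - δ_{jk}) K`. Hence the vanishing combination at `v`
is `q(Ω's - Ω'v) · K*(Ω's, Ω'v)` for the quadratic polynomial
`q(u) = (c - ∑_j a_{jj}) - ∑_i a_i u_i + uᵀ A u`, `A` the upper triangular matrix of the `a_{jk}`.
As the kernel is positive, `q(w + N γ) = 0` on the grid `γ ∈ {-1,0,1}^D`, where `w = Ω'(s - v₀)`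
and `N = -Ω' diag(λ)` is invertible. Evaluating at `γ = 0, ±e_d, e_d + e_e` kills the constant
and linear coefficients and the symmetric part of the quadratic coefficient of `γ ↦ q(w + N γ)`,
and pulling back through `N` does the same for `q`. An upper triangular matrix with
`A + Aᵀ = 0` vanishes, which then also kills `a` and `c`.
-/

open Matrix

theorem hasFDerivAt_isoGaussKernel {D : ℕ} (y x : Fin D → ℝ) :
    HasFDerivAt (fun x => isoGaussKernel x y)
      (isoGaussKernel x y •
        ∑ i, (-(x i - y i)) • (ContinuousLinearMap.proj i : (Fin D → ℝ) →L[ℝ] ℝ)) x := by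
  have hsq : HasFDerivAt (fun x : Fin D → ℝ => ∑ i, (x i - y i) ^ 2)
      (∑ i, (2 * (x i - y i)) • (ContinuousLinearMap.proj i : (Fin D → ℝ) →L[ℝ] ℝ)) x := by
    refine HasFDerivAt.fun_sum fun i _ => ?_
    simpa using ((hasFDerivAt_apply i x).sub_const (y i)).pow 2
  have hK : (fun x => isoGaussKernel x y)
      = fun x => Real.exp ((∑ i, (x i - y i) ^ 2) * (-1 / 2)) := by
    ext x; simp only [isoGaussKernel]; ring_nf
  rw [hK]
  refine (hsq.mul_const (-1 / 2)).exp.congr_fderiv ?_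
  ext j
  simp only [isoGaussKernel, _root_.smul_apply, FunLike.coe_sum, Finset.sum_apply,
    ContinuousLinearMap.proj_apply, smul_eq_mul]
  rw [Finset.mul_sum]
  congr 1
  · ring_nf
  · exact Finset.sum_congr rfl fun i _ => by ring

theorem pd_isoGaussKernel {D : ℕ} (y x : Fin D → ℝ) (i : Fin D) :
    pd i (fun x => isoGaussKernel x y) x = -(x i - y i) * isoGaussKernel x y := by
  simp [pd, (hasFDerivAt_isoGaussKernel y x).fderiv, Pi.single_apply, mul_comm]

theorem pdd_isoGaussKernel {D : ℕ} (y x : Fin D → ℝ) (j k : Fin D) :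
    pdd j k (fun x => isoGaussKernel x y) x
      = ((x j - y j) * (x k - y k) - if j = k then 1 else 0) * isoGaussKernel x y := by
  have hpd : (fun x' => fderiv ℝ (fun x => isoGaussKernel x y) x' (Pi.single k 1))
      = fun x' => -(x' k - y k) * isoGaussKernel x' y :=
    funext fun x' => pd_isoGaussKernel y x' k
  have h := ((hasFDerivAt_apply k x).sub_const (y k)).fun_neg.fun_mul
    (hasFDerivAt_isoGaussKernel y x)
  rw [pdd, hpd, h.fderiv]
  simp only [_root_.add_apply, _root_.smul_apply, _root_.neg_apply, _root_.sum_apply,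
    ContinuousLinearMap.proj_apply, Pi.single_apply, smul_eq_mul, mul_ite, mul_one, mul_zero,
    sum_ite_eq', mem_univ, if_true]
  rcases eq_or_ne j k with rfl | hjk
  · simp only [if_true]; ring
  · simp only [hjk, hjk.symm, if_false]; ring

def ternaryGrid (ι K : Type*) [Field K] : Set (ι → K) :=
  {γ | ∀ d, γ d = -1 ∨ γ d = 0 ∨ γ d = 1}

section QuadraticFn

variable {ι K : Type*} [Field K]

def quadraticFn [Fintype ι] (c : K) (b : ι → K) (A : Matrix ι ι K) (u : ι → K) : K :=
  c + b ⬝ᵥ u + u ⬝ᵥ A *ᵥ u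

def upperMatrix [LinearOrder ι] (a2 : ι → ι → K) : Matrix ι ι K :=
  Matrix.of fun j k => if j ≤ k then a2 j k else 0

theorem single_mem_ternaryGrid [DecidableEq ι] (d : ι) {t : K} (ht : t = -1 ∨ t = 0 ∨ t = 1) :
    Pi.single d t ∈ ternaryGrid ι K := by
  intro i
  rcases eq_or_ne i d with rfl | hi
  · simpa using ht
  · simp [hi]

theorem single_add_single_mem_ternaryGrid [DecidableEq ι] {d e : ι} (hde : d ≠ e) :
    Pi.single d 1 + Pi.single e 1 ∈ ternaryGrid ι K := by
  intro i
  rcases eq_or_ne i d with rfl | hid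
  · simp [hde]
  · rcases eq_or_ne i e with rfl | hie
    · simp [hid]
    · simp [hid, hie]

theorem quadraticFn_add_mulVec [Fintype ι] (c : K) (b : ι → K) (A N : Matrix ι ι K)
    (w γ : ι → K) :
    quadraticFn c b A (w + N *ᵥ γ)
      = quadraticFn (quadraticFn c b A w) (Nᵀ *ᵥ (b + (A + Aᵀ) *ᵥ w)) (Nᵀ * A * N) γ := by
  have hquad : γ ⬝ᵥ (Nᵀ * A * N) *ᵥ γ = N *ᵥ γ ⬝ᵥ A *ᵥ (N *ᵥ γ) := by
    rw [← mulVec_mulVec, ← mulVec_mulVec, dotProduct_mulVec, vecMul_transpose]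
  have hlin : Nᵀ *ᵥ (b + (A + Aᵀ) *ᵥ w) ⬝ᵥ γ
      = b ⬝ᵥ N *ᵥ γ + w ⬝ᵥ A *ᵥ (N *ᵥ γ) + N *ᵥ γ ⬝ᵥ A *ᵥ w := by
    simp only [mulVec_transpose, ← dotProduct_mulVec, add_mulVec, add_dotProduct]
    rw [dotProduct_comm (A *ᵥ w)]
    ring
  rw [quadraticFn, quadraticFn, quadraticFn, hquad, hlin]
  simp only [mulVec_add, dotProduct_add, add_dotProduct]
  ring

variable [CharZero K]

theorem quadraticFn_coeffs_eq_zero_of_forall_ternaryGrid [Fintype ι] [DecidableEq ι]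
    {c : K} {b : ι → K} {A : Matrix ι ι K}
    (h : ∀ γ ∈ ternaryGrid ι K, quadraticFn c b A γ = 0) : c = 0 ∧ b = 0 ∧ A + Aᵀ = 0 := by
  have h₀ : c = 0 := by simpa [quadraticFn] using h 0 (by simp [ternaryGrid])
  have hpos (d : ι) : c + b d + A d d = 0 := by
    simpa [quadraticFn, mulVec_single] using
      h _ (single_mem_ternaryGrid d (t := (1 : K)) (by simp))
  have hneg (d : ι) : c - b d + A d d = 0 := by
    simpa [quadraticFn, mulVec_single, ← sub_eq_add_neg] using
      h _ (single_mem_ternaryGrid d (t := (-1 : K)) (by simp))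
  have hpair {d e : ι} (hde : d ≠ e) : c + b d + b e + A d d + A d e + A e d + A e e = 0 := by
    have := h _ (single_add_single_mem_ternaryGrid (K := K) hde)
    simp only [quadraticFn, mulVec_add, mulVec_single_one, dotProduct_add, add_dotProduct,
      dotProduct_single, single_dotProduct, col_apply, mul_one, one_mul] at this
    linear_combination this
  refine ⟨h₀, funext fun d => ?_, ext fun d e => ?_⟩
  · show b d = 0
    linear_combination (hpos d - hneg d) / 2
  · rcases eq_or_ne d e with rfl | hde
    · simp only [Matrix.add_apply, transpose_apply, Matrix.zero_apply, add_self_eq_zero]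
      linear_combination (hpos d + hneg d) / 2 - h₀
    · simp only [Matrix.add_apply, transpose_apply, Matrix.zero_apply]
      linear_combination hpair hde - hpos d - hpos e + h₀

theorem quadraticFn_coeffs_eq_zero_of_forall_affine_ternaryGrid [Fintype ι] [DecidableEq ι]
    {c : K} {b : ι → K} {A N : Matrix ι ι K} (hN : IsUnit N.det) (w : ι → K)
    (h : ∀ γ ∈ ternaryGrid ι K, quadraticFn c b A (w + N *ᵥ γ) = 0) :
    c = 0 ∧ b = 0 ∧ A + Aᵀ = 0 := by
  simp only [quadraticFn_add_mulVec] at h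
  obtain ⟨hw, hlin, hquad⟩ := quadraticFn_coeffs_eq_zero_of_forall_ternaryGrid h
  have hNunit : IsUnit N := (isUnit_iff_isUnit_det N).mpr hN
  have hNtunit : IsUnit Nᵀ := (isUnit_iff_isUnit_det _).mpr (by rwa [det_transpose])
  have hskew : A + Aᵀ = 0 := by
    have : Nᵀ * (A + Aᵀ) * N = 0 := by
      rw [← hquad, transpose_mul, transpose_mul, transpose_transpose, Matrix.mul_add,
        Matrix.add_mul, Matrix.mul_assoc, Matrix.mul_assoc]
    exact hNtunit.mul_right_eq_zero.mp (hNunit.mul_left_eq_zero.mp this)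
  have hb : b = 0 := by
    rw [hskew, zero_mulVec, add_zero] at hlin
    exact mulVec_injective_of_isUnit hNtunit (hlin.trans (mulVec_zero _).symm)
  have hw_quad : w ⬝ᵥ A *ᵥ w = 0 := by
    have : w ⬝ᵥ (A + Aᵀ) *ᵥ w = 2 * (w ⬝ᵥ A *ᵥ w) := by
      rw [add_mulVec, dotProduct_add, mulVec_transpose, dotProduct_comm w (w ᵥ* A),
        ← dotProduct_mulVec]
      ring
    rw [hskew, zero_mulVec, dotProduct_zero] at this
    exact (mul_eq_zero.mp this.symm).resolve_left two_ne_zero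
  refine ⟨?_, hb, hskew⟩
  simpa [quadraticFn, hb, hw_quad] using hw

theorem upperMatrix_eq_zero_of_add_transpose_eq_zero [LinearOrder ι] {a2 : ι → ι → K}
    (h : upperMatrix a2 + (upperMatrix a2)ᵀ = 0) {j k : ι} (hjk : j ≤ k) : a2 j k = 0 := by
  have hjk' := congr_fun₂ h j k
  rcases hjk.eq_or_lt with rfl | hlt
  · simpa [upperMatrix] using hjk'
  · simpa [upperMatrix, hjk, hlt.not_ge] using hjk'

end QuadraticFn

theorem isoGaussKernel_jet_eq {D : ℕ} (c : ℝ) (a : Fin D → ℝ) (a2 : Fin D → Fin D → ℝ)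
    (x y : Fin D → ℝ) :
    c * isoGaussKernel x y + ∑ i, a i * pd i (fun x => isoGaussKernel x y) x
        + ∑ j, ∑ k, (if j ≤ k then a2 j k * pdd j k (fun x => isoGaussKernel x y) x else 0)
      = quadraticFn (c - ∑ j, a2 j j) (-a) (upperMatrix a2) (x - y) * isoGaussKernel x y := by
  set u := x - y
  have hpd (i : Fin D) : a i * pd i (fun x => isoGaussKernel x y) x
      = -(a i * u i) * isoGaussKernel x y := by
    rw [pd_isoGaussKernel]; simp only [u, Pi.sub_apply]; ring
  have hpdd (j k : Fin D) :
      (if j ≤ k then a2 j k * pdd j k (fun x => isoGaussKernel x y) x else 0)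
        = (u j * (upperMatrix a2 j k * u k) - if j = k then a2 j j else 0)
          * isoGaussKernel x y := by
    rw [pdd_isoGaussKernel]
    rcases lt_trichotomy j k with hlt | rfl | hgt
    · simp only [upperMatrix, of_apply, hlt.le, hlt.ne, if_true, if_false, u, Pi.sub_apply]
      ring
    · simp only [upperMatrix, of_apply, le_refl, if_true, u, Pi.sub_apply]
      ring
    · simp [upperMatrix, hgt.not_ge, hgt.ne']
  simp only [hpd, hpdd, ← sum_mul, sum_sub_distrib, sum_ite_eq, mem_univ, if_true,
    quadraticFn, dotProduct, mulVec, mul_sum, Pi.neg_apply, neg_mul, sum_neg_distrib]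
  ring

theorem isoGaussKernel_nondegenerate_general {D : ℕ}
    (Om : Matrix (Fin D) (Fin D) ℝ) (hinv : IsUnit Om.det)
    (V : Set (Fin D → ℝ)) (v₀ : Fin D → ℝ) (lam : Fin D → ℝ) (hlam : ∀ d, 0 < lam d)
    (hgrid : ∀ γ : Fin D → ℝ, (∀ d, γ d = -1 ∨ γ d = 0 ∨ γ d = 1) →
      (fun d => v₀ d + lam d * γ d) ∈ V)
    (s : Fin D → ℝ)
    (c : ℝ) (a : Fin D → ℝ) (a2 : Fin D → Fin D → ℝ)
    (hvanish : ∀ v ∈ V,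
      c * isoGaussKernel (Om.mulVec s) (Om.mulVec v)
        + (∑ i, a i * pd i (fun x => isoGaussKernel x (Om.mulVec v)) (Om.mulVec s))
        + (∑ j, ∑ k, if j ≤ k then
            a2 j k * pdd j k (fun x => isoGaussKernel x (Om.mulVec v)) (Om.mulVec s)
          else 0) = 0) :
    c = 0 ∧ a = 0 ∧ ∀ j k : Fin D, j ≤ k → a2 j k = 0 := by
  have hN : IsUnit (Om * diagonal (-lam)).det := by
    rw [det_mul, det_diagonal]
    exact hinv.mul (isUnit_iff_ne_zero.mpr
      (prod_ne_zero_iff.mpr fun d _ => neg_ne_zero.mpr (hlam d).ne'))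
  have hq : ∀ γ ∈ ternaryGrid (Fin D) ℝ, quadraticFn (c - ∑ j, a2 j j) (-a) (upperMatrix a2)
      (Om *ᵥ (s - v₀) + (Om * diagonal (-lam)) *ᵥ γ) = 0 := by
    intro γ hγ
    have hv := hvanish _ (hgrid γ hγ)
    have hpoint : (fun d => v₀ d + lam d * γ d) = v₀ - diagonal (-lam) *ᵥ γ := by
      ext d; simp [mulVec_diagonal]
    have hdiff : Om *ᵥ s - Om *ᵥ (v₀ - diagonal (-lam) *ᵥ γ)
        = Om *ᵥ (s - v₀) + (Om * diagonal (-lam)) *ᵥ γ := by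
      rw [mulVec_sub, mulVec_sub, ← mulVec_mulVec]; abel
    rw [isoGaussKernel_jet_eq, hpoint, hdiff] at hv
    exact (mul_eq_zero.mp hv).resolve_right (Real.exp_pos _).ne'
  obtain ⟨hc, ha, hA⟩ := quadraticFn_coeffs_eq_zero_of_forall_affine_ternaryGrid hN _ hq
  have ha2 (j k : Fin D) : j ≤ k → a2 j k = 0 := upperMatrix_eq_zero_of_add_transpose_eq_zero hA
  refine ⟨?_, neg_eq_zero.mp ha, ha2⟩
  simpa [ha2 _ _ le_rfl] using hc

/-- non-degeneracy of the isotropic Gaussian kernel and its first and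
second derivatives under an invertible symmetric linear transformation `Ω'`,
evaluated on a `3^D`-point grid contained in `V`. -/
theorem isoGaussKernel_nondegenerate {D : ℕ}
    (Om : Matrix (Fin D) (Fin D) ℝ) (hsym : Om.IsSymm) (hinv : IsUnit Om.det)
    (V : Set (Fin D → ℝ)) (v₀ : Fin D → ℝ) (lam : Fin D → ℝ) (hlam : ∀ d, 0 < lam d)
    (hgrid : ∀ γ : Fin D → ℝ, (∀ d, γ d = -1 ∨ γ d = 0 ∨ γ d = 1) →
      (fun d => v₀ d + lam d * γ d) ∈ V)
    (s : Fin D → ℝ)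
    (c : ℝ) (a : Fin D → ℝ) (a2 : Fin D → Fin D → ℝ)
    (hvanish : ∀ v ∈ V,
      c * isoGaussKernel (Om.mulVec s) (Om.mulVec v)
        + (∑ i, a i * pd i (fun x => isoGaussKernel x (Om.mulVec v)) (Om.mulVec s))
        + (∑ j, ∑ k, if j ≤ k then
            a2 j k * pdd j k (fun x => isoGaussKernel x (Om.mulVec v)) (Om.mulVec s)
          else 0) = 0) :
    c = 0 ∧ a = 0 ∧ ∀ j k : Fin D, j ≤ k → a2 j k = 0 :=
  isoGaussKernel_nondegenerate_general Om hinv V v₀ lam hlam hgrid s c a a2 hvanish
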